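/- Let H_{k,1} (k > 2) be the graph consisting of two k-cliques sharing exactly one vertex v. If 1/k < γ < 1 − 1/k, then the configuration in which every vertex holds a single event inviting all of its neighbors at rate 1/k is stable and supports H_{k,1}: within each clique every pair meets at rate exactly 1; the only pairs of non-adjacent vertices lie in different cliques and have meeting rate at most 1/k (supported only by v), so creating a new connection would require additional invitation rate at least 1 − 1/k > γ, which is unprofitable. -/

import Mathlib

open Finset

/-- An event configuration: each agent holds a finite list of events,
each event being a set of attendees together with a rate. -/
abbrev Config (V : Type*) := V → List (Finset V × ℝ)

section Game

variable {V : Type*} [Fintype V] [DecidableEq V]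

/-- A valid strategy for `v`: every event contains `v` and has positive rate. -/
def ValidStrategy (v : V) (s : List (Finset V × ℝ)) : Prop :=
  ∀ e ∈ s, v ∈ e.1 ∧ 0 < e.2

def ConfigValid (cfg : Config V) : Prop := ∀ v, ValidStrategy v (cfg v)

/-- The meeting rate between `u` and `v` supported by `w` (rate of events held by `w`
attended by both `u` and `v`). -/
def rateBy (cfg : Config V) (w u v : V) : ℝ :=
  ((cfg w).map (fun e => if u ∈ e.1 ∧ v ∈ e.1 then e.2 else 0)).sum

/-- The total meeting rate between `u` and `v`. -/
def meet (cfg : Config V) (u v : V) : ℝ := ∑ w, rateBy cfg w u v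

/-- `u` and `v` are connected when their meeting rate is at least the threshold `1`. -/
def connected (cfg : Config V) (u v : V) : Prop := u ≠ v ∧ 1 ≤ meet cfg u v

open scoped Classical in
/-- The set of agents connected to `v`. -/
noncomputable def nbrs (cfg : Config V) (v : V) : Finset V :=
  univ.filter (fun u => connected cfg u v)

/-- The cost of strategy `s` for agent `v` with parameters `b, c`. -/
def stratCost (b c : ℝ) (v : V) (s : List (Finset V × ℝ)) : ℝ :=
  (s.map (fun e => e.2 * (c * ((e.1.erase v).card : ℝ) + b))).sum

/-- Utility of agent `v`: benefit `a` per connection minus cost of own events. -/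
noncomputable def utility (a b c : ℝ) (cfg : Config V) (v : V) : ℝ :=
  a * ((nbrs cfg v).card : ℝ) - stratCost b c v (cfg v)

/-- A configuration is stable when it is valid and is a Nash equilibrium:
no agent can strictly improve her utility by a unilateral change of strategy. -/
def Stable (a b c : ℝ) (cfg : Config V) : Prop :=
  ConfigValid cfg ∧ ∀ v (s : List (Finset V × ℝ)), ValidStrategy v s →
    utility a b c (Function.update cfg v s) v ≤ utility a b c cfg v

/-- A configuration supports the graph `G` when adjacency coincides with connection. -/
def Supports (cfg : Config V) (G : SimpleGraph V) : Prop :=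
  ∀ u v, G.Adj u v ↔ connected cfg u v

end Game

/-- The configuration supporting `H_{k,1}`: the shared vertex `v` holds a single event for
`A ∪ B` at rate `1/k`; every other member of `A` (resp. `B`) holds a single event for `A`
(resp. `B`) at rate `1/k`. -/
noncomputable def bowtieCfg {V : Type*} [DecidableEq V] (A B : Finset V) (v : V) (k : ℕ) : Config V :=
  fun u => if u = v then [(A ∪ B, 1 / (k : ℝ))]
    else if u ∈ A then [(A, 1 / (k : ℝ))] else [(B, 1 / (k : ℝ))]

/-!
Two clique-mates meet at rate exactly `1`, since each of the `k` hosts of their clique invites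
both at rate `1/k`; two vertices in different cliques meet only at the event of `v`, at rate `1/k`.
Against the others' fixed events, a deviating agent `u` thus meets each clique-mate at rate
`1 - 1/k` and everybody else at rate `1/k`. To be connected with `w` it must invite `w` at rate
at least `1 - (rate from the others)`, at marginal cost `c` per unit: a clique-mate costs at least
`c/k < a`, anybody else at least `c (1 - 1/k) ≥ a`. A deviation keeping some connection also has
total rate at least `1/k`, hence pays at least `b/k`, so it is worth at most the current utility
`#P (a - c/k) - b/k`, where `P` is the set of clique-mates of `u`. A deviation with no connection
is worth at most `0`, which is below the current utility once `b` is small.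
-/

section Strategy

variable {V : Type*}

def totalRate (s : List (Finset V × ℝ)) : ℝ := (s.map Prod.snd).sum

lemma totalRate_nonneg {s : List (Finset V × ℝ)} (hs : ∀ e ∈ s, 0 ≤ e.2) :
    0 ≤ totalRate s :=
  List.sum_nonneg fun _ hx => by
    obtain ⟨e, he, rfl⟩ := List.mem_map.mp hx
    exact hs e he

lemma ValidStrategy.rate_nonneg {u : V} {s : List (Finset V × ℝ)} (hs : ValidStrategy u s) :
    ∀ e ∈ s, 0 ≤ e.2 :=
  fun e he => (hs e he).2.le

variable [DecidableEq V]

def ownRate (s : List (Finset V × ℝ)) (w : V) : ℝ :=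
  (s.map fun e => if w ∈ e.1 then e.2 else 0).sum

lemma ownRate_le_totalRate {s : List (Finset V × ℝ)} (hs : ∀ e ∈ s, 0 ≤ e.2) (w : V) :
    ownRate s w ≤ totalRate s :=
  List.sum_le_sum fun e he => by split_ifs <;> simp [hs e he]

lemma mul_sum_ownRate_add_le_stratCost (b : ℝ) {c : ℝ} (hc : 0 ≤ c) {u : V} {N : Finset V}
    (huN : u ∉ N) {s : List (Finset V × ℝ)} (hs : ∀ e ∈ s, 0 ≤ e.2) :
    c * ∑ w ∈ N, ownRate s w + b * totalRate s ≤ stratCost b c u s := by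
  induction s with
  | nil => simp [ownRate, totalRate, stratCost]
  | cons e s ih =>
    have he : 0 ≤ e.2 := hs e List.mem_cons_self
    have hcard : #(N.filter (· ∈ e.1)) ≤ #(e.1.erase u) :=
      card_le_card fun w hw => by
        obtain ⟨hwN, hwe⟩ := mem_filter.mp hw
        exact mem_erase.mpr ⟨fun h => huN (h ▸ hwN), hwe⟩
    have hfirst : c * ∑ w ∈ N, (if w ∈ e.1 then e.2 else 0) ≤ e.2 * (c * #(e.1.erase u)) := by
      rw [← sum_filter, sum_const, nsmul_eq_mul]
      calc c * (#(N.filter (· ∈ e.1)) * e.2) = e.2 * (c * #(N.filter (· ∈ e.1))) := by ring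
        _ ≤ e.2 * (c * #(e.1.erase u)) := by gcongr
    have := ih fun e' he' => hs e' (List.mem_cons_of_mem _ he')
    simp only [ownRate, totalRate, stratCost, List.map_cons, List.sum_cons, sum_add_distrib] at *
    linarith

end Strategy

section Deviation

variable {V : Type*} [Fintype V] [DecidableEq V]

lemma meet_comm (cfg : Config V) (x y : V) : meet cfg x y = meet cfg y x := by
  simp only [meet, rateBy, and_comm]

def othersRate (cfg : Config V) (u w : V) : ℝ := meet cfg u w - rateBy cfg u u w

lemma meet_update_self (cfg : Config V) {u : V} {s : List (Finset V × ℝ)}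
    (hs : ValidStrategy u s) (w : V) :
    meet (Function.update cfg u s) u w = ownRate s w + othersRate cfg u w := by
  have hrest : ∀ cfg' : Config V, meet cfg' u w - rateBy cfg' u u w =
      ∑ w' ∈ univ.erase u, rateBy cfg' w' u w := fun cfg' => by
    rw [meet, ← add_sum_erase _ _ (mem_univ u), add_sub_cancel_left]
  have hown : rateBy (Function.update cfg u s) u u w = ownRate s w := by
    simp only [rateBy, ownRate, Function.update_self]
    congr 1
    exact List.map_congr_left fun e he => by simp [(hs e he).1]
  rw [othersRate, hrest, ← hown, ← add_sub_cancel (rateBy _ u u w) (meet _ u w), hrest]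
  congr 1
  exact sum_congr rfl fun w' hw' => by rw [rateBy, Function.update_of_ne (ne_of_mem_erase hw')]; rfl

lemma mem_nbrs {cfg : Config V} {u w : V} : w ∈ nbrs cfg u ↔ connected cfg w u := by
  simp [nbrs]

lemma one_sub_othersRate_le_ownRate (cfg : Config V) {u w : V} {s : List (Finset V × ℝ)}
    (hs : ValidStrategy u s) (hw : w ∈ nbrs (Function.update cfg u s) u) :
    1 - othersRate cfg u w ≤ ownRate s w := by
  have := (mem_nbrs.mp hw).2
  rw [meet_comm, meet_update_self cfg hs] at this
  linarith

lemma utility_update_le_sum (cfg : Config V) (a b : ℝ) {c : ℝ} (hc : 0 ≤ c) {u : V}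
    {s : List (Finset V × ℝ)} (hs : ValidStrategy u s) :
    utility a b c (Function.update cfg u s) u ≤
      ∑ w ∈ nbrs (Function.update cfg u s) u, (a - c * (1 - othersRate cfg u w))
        - b * totalRate s := by
  set N := nbrs (Function.update cfg u s) u
  have huN : u ∉ N := fun h => (mem_nbrs.mp h).1 rfl
  have hown : ∀ w ∈ N, 1 - othersRate cfg u w ≤ ownRate s w := fun w hw =>
    one_sub_othersRate_le_ownRate cfg hs hw
  have hcost := mul_sum_ownRate_add_le_stratCost b hc huN hs.rate_nonneg
  have hsum : c * ∑ w ∈ N, (1 - othersRate cfg u w) ≤ c * ∑ w ∈ N, ownRate s w :=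
    mul_le_mul_of_nonneg_left (sum_le_sum hown) hc
  rw [utility, Function.update_self, sum_sub_distrib, sum_const, nsmul_eq_mul, ← mul_sum]
  linarith [mul_comm a (#N : ℝ)]

lemma utility_update_le (cfg : Config V) {a b c r : ℝ} (hb : 0 ≤ b) (hc : 0 ≤ c)
    (hcr : c * r ≤ a) {u : V} (P : Finset V)
    (hothers : ∀ w ≠ u, othersRate cfg u w ≤ 1 - r)
    (hunprofitable : ∀ w ≠ u, w ∉ P → a ≤ c * (1 - othersRate cfg u w))
    (hbP : b * r ≤ #P * (a - c * r)) {s : List (Finset V × ℝ)} (hs : ValidStrategy u s) :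
    utility a b c (Function.update cfg u s) u ≤ #P * (a - c * r) - b * r := by
  set N := nbrs (Function.update cfg u s) u
  have hne : ∀ w ∈ N, w ≠ u := fun w hw => (mem_nbrs.mp hw).1
  have hgain : ∑ w ∈ N, (a - c * (1 - othersRate cfg u w)) ≤ #P * (a - c * r) :=
    calc ∑ w ∈ N, (a - c * (1 - othersRate cfg u w))
        ≤ ∑ w ∈ N, if w ∈ P then a - c * r else 0 := sum_le_sum fun w hw => by
          split_ifs with hwP
          · nlinarith [hothers w (hne w hw)]
          · linarith [hunprofitable w (hne w hw) hwP]
      _ = #(N ∩ P) * (a - c * r) := by rw [sum_ite_mem, sum_const, nsmul_eq_mul]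
      _ ≤ #P * (a - c * r) := mul_le_mul_of_nonneg_right
          (by exact_mod_cast card_le_card inter_subset_right) (sub_nonneg.mpr hcr)
  have hdev : utility a b c (Function.update cfg u s) u ≤
      ∑ w ∈ N, (a - c * (1 - othersRate cfg u w)) - b * totalRate s :=
    utility_update_le_sum cfg a b hc hs
  rcases N.eq_empty_or_nonempty with hN | ⟨w₀, hw₀⟩
  · have := mul_nonneg hb (totalRate_nonneg hs.rate_nonneg)
    rw [hN, sum_empty] at hdev
    nlinarith
  · have hr : r ≤ totalRate s := by
      linarith [one_sub_othersRate_le_ownRate cfg hs hw₀, hothers w₀ (hne w₀ hw₀),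
        ownRate_le_totalRate hs.rate_nonneg w₀]
    nlinarith

end Deviation

section Bowtie

variable {V : Type*} [DecidableEq V]

def bowtieEvent (A B : Finset V) (v w : V) : Finset V :=
  if w = v then A ∪ B else if w ∈ A then A else B

lemma bowtieCfg_apply {A B : Finset V} {v : V} {k : ℕ} (w : V) :
    bowtieCfg A B v k w = [(bowtieEvent A B v w, 1 / (k : ℝ))] := by
  unfold bowtieCfg bowtieEvent
  split_ifs <;> rfl

variable [Fintype V]

structure IsBowtie (A B : Finset V) (v : V) : Prop where
  inter_eq : A ∩ B = {v}
  union_eq : A ∪ B = univ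

namespace IsBowtie

variable {A B : Finset V} {v : V}

lemma symm (h : IsBowtie A B v) : IsBowtie B A v :=
  ⟨by rw [inter_comm, h.inter_eq], by rw [union_comm, h.union_eq]⟩

lemma mem_or (h : IsBowtie A B v) (x : V) : x ∈ A ∨ x ∈ B :=
  mem_union.mp (h.union_eq ▸ mem_univ x)

lemma eq_of_mem_of_mem (h : IsBowtie A B v) {x : V} (hA : x ∈ A) (hB : x ∈ B) : x = v :=
  mem_singleton.mp (h.inter_eq ▸ mem_inter.mpr ⟨hA, hB⟩)

lemma mem_left (h : IsBowtie A B v) : v ∈ A :=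
  (mem_inter.mp (h.inter_eq ▸ mem_singleton_self v)).1

lemma mem_right (h : IsBowtie A B v) : v ∈ B :=
  h.symm.mem_left

end IsBowtie

variable {A B : Finset V} {v : V} {k : ℕ}

lemma meet_bowtieCfg (x y : V) :
    meet (bowtieCfg A B v k) x y = #{w | x ∈ bowtieEvent A B v w ∧ y ∈ bowtieEvent A B v w} / k := by
  simp only [meet, rateBy, bowtieCfg_apply, List.map_cons, List.map_nil, List.sum_cons,
    List.sum_nil, add_zero]
  rw [← sum_filter, sum_const, nsmul_eq_mul, mul_one_div]

namespace IsBowtie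

lemma mem_bowtieEvent_iff (h : IsBowtie A B v) {x w : V} :
    x ∈ bowtieEvent A B v w ↔ (w ∈ A ∧ x ∈ A) ∨ (w ∈ B ∧ x ∈ B) := by
  unfold bowtieEvent
  split_ifs <;> grind [h.mem_or x, h.mem_or w, h.mem_left, h.mem_right, h.eq_of_mem_of_mem]

lemma bowtieEvent_comm (h : IsBowtie A B v) (w : V) : bowtieEvent A B v w = bowtieEvent B A v w := by
  ext x
  rw [h.mem_bowtieEvent_iff, h.symm.mem_bowtieEvent_iff]
  tauto

lemma bowtieCfg_comm (h : IsBowtie A B v) : bowtieCfg A B v k = bowtieCfg B A v k :=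
  funext fun w => by rw [bowtieCfg_apply, bowtieCfg_apply, h.bowtieEvent_comm]

lemma mem_bowtieEvent_comm (h : IsBowtie A B v) {x y : V} :
    y ∈ bowtieEvent A B v x ↔ x ∈ bowtieEvent A B v y := by
  rw [h.mem_bowtieEvent_iff, h.mem_bowtieEvent_iff]
  tauto

lemma self_mem_bowtieEvent (h : IsBowtie A B v) (u : V) : u ∈ bowtieEvent A B v u := by
  rw [h.mem_bowtieEvent_iff]
  rcases h.mem_or u with hu | hu <;> simp [hu]

lemma meet_bowtieCfg_of_mem_left (h : IsBowtie A B v) (hA : #A = k) {x y : V}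
    (hx : x ∈ A) (hy : y ∈ A) (hxy : x ≠ y) : meet (bowtieCfg A B v k) x y = 1 := by
  have hcommon : ({w | x ∈ bowtieEvent A B v w ∧ y ∈ bowtieEvent A B v w} : Finset V) = A := by
    ext w
    simp only [mem_filter, mem_univ, true_and, h.mem_bowtieEvent_iff]
    grind [h.mem_or w, h.eq_of_mem_of_mem]
  have hk : (k : ℝ) ≠ 0 := by
    rw [← hA]; exact_mod_cast (card_pos.mpr ⟨x, hx⟩).ne'
  rw [meet_bowtieCfg, hcommon, hA, div_self hk]

lemma meet_bowtieCfg_of_not_mem (h : IsBowtie A B v) {x y : V}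
    (hy : y ∉ bowtieEvent A B v x) : meet (bowtieCfg A B v k) x y = 1 / k := by
  rw [h.mem_bowtieEvent_iff] at hy
  have hcommon : ({w | x ∈ bowtieEvent A B v w ∧ y ∈ bowtieEvent A B v w} : Finset V) = {v} := by
    ext w
    simp only [mem_filter, mem_univ, true_and, h.mem_bowtieEvent_iff, mem_singleton]
    grind [h.mem_or x, h.mem_or y, h.mem_left, h.mem_right, h.eq_of_mem_of_mem]
  rw [meet_bowtieCfg, hcommon, card_singleton, Nat.cast_one]

lemma meet_bowtieCfg_of_mem (h : IsBowtie A B v) (hA : #A = k) (hB : #B = k) {x y : V}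
    (hxy : x ≠ y) (hy : y ∈ bowtieEvent A B v x) : meet (bowtieCfg A B v k) x y = 1 := by
  rcases h.mem_bowtieEvent_iff.mp hy with ⟨hx, hy⟩ | ⟨hx, hy⟩
  · exact h.meet_bowtieCfg_of_mem_left hA hx hy hxy
  · rw [h.bowtieCfg_comm]
    exact h.symm.meet_bowtieCfg_of_mem_left hB hx hy hxy

lemma configValid_bowtieCfg (h : IsBowtie A B v) (hk : 0 < k) : ConfigValid (bowtieCfg A B v k) :=
  fun u e he => by
    rw [bowtieCfg_apply, List.mem_singleton] at he
    subst he
    exact ⟨h.self_mem_bowtieEvent u, by positivity⟩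

lemma connected_bowtieCfg_iff (h : IsBowtie A B v) (hk : 1 < k) (hA : #A = k) (hB : #B = k)
    {x y : V} (hxy : x ≠ y) :
    connected (bowtieCfg A B v k) x y ↔ y ∈ bowtieEvent A B v x := by
  by_cases hy : y ∈ bowtieEvent A B v x
  · exact iff_of_true ⟨hxy, (h.meet_bowtieCfg_of_mem hA hB hxy hy).ge⟩ hy
  · refine iff_of_false (fun hconn => ?_) hy
    have hk' : (1 : ℝ) < k := by exact_mod_cast hk
    have := hconn.2
    rw [h.meet_bowtieCfg_of_not_mem hy, le_div_iff₀ (by linarith)] at this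
    linarith

lemma nbrs_bowtieCfg (h : IsBowtie A B v) (hk : 1 < k) (hA : #A = k) (hB : #B = k) (u : V) :
    nbrs (bowtieCfg A B v k) u = (bowtieEvent A B v u).erase u := by
  ext w
  rw [mem_nbrs, mem_erase]
  by_cases hwu : w = u
  · simp [hwu, connected]
  · rw [h.connected_bowtieCfg_iff hk hA hB hwu, h.mem_bowtieEvent_comm]
    exact ⟨fun hw => ⟨hwu, hw⟩, And.right⟩

lemma le_card_erase_bowtieEvent (h : IsBowtie A B v) (hA : #A = k) (hB : #B = k) (u : V) :
    k ≤ #((bowtieEvent A B v u).erase u) + 1 := by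
  rw [card_erase_add_one (h.self_mem_bowtieEvent u)]
  rcases h.mem_or u with hu | hu
  · exact hA ▸ card_le_card fun x hx => h.mem_bowtieEvent_iff.mpr (Or.inl ⟨hu, hx⟩)
  · exact hB ▸ card_le_card fun x hx => h.mem_bowtieEvent_iff.mpr (Or.inr ⟨hu, hx⟩)

lemma utility_bowtieCfg (h : IsBowtie A B v) (hk : 1 < k) (hA : #A = k) (hB : #B = k)
    (a b c : ℝ) (u : V) :
    utility a b c (bowtieCfg A B v k) u =
      #((bowtieEvent A B v u).erase u) * (a - c * (1 / k)) - b * (1 / k) := by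
  rw [utility, h.nbrs_bowtieCfg hk hA hB, stratCost, bowtieCfg_apply]
  simp only [List.map_cons, List.map_nil, List.sum_cons, List.sum_nil, add_zero]
  ring

lemma othersRate_bowtieCfg (h : IsBowtie A B v) (hA : #A = k) (hB : #B = k) {u w : V}
    (hwu : w ≠ u) :
    othersRate (bowtieCfg A B v k) u w =
      if w ∈ bowtieEvent A B v u then 1 - 1 / (k : ℝ) else 1 / k := by
  have hown : rateBy (bowtieCfg A B v k) u u w =
      if w ∈ bowtieEvent A B v u then 1 / (k : ℝ) else 0 := by
    simp [rateBy, bowtieCfg_apply, h.self_mem_bowtieEvent u]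
  rw [othersRate, hown]
  split_ifs with hw
  · rw [h.meet_bowtieCfg_of_mem hA hB hwu.symm hw]
  · rw [h.meet_bowtieCfg_of_not_mem hw, sub_zero]

lemma stable_bowtieCfg (h : IsBowtie A B v) (hk : 2 ≤ k) (hA : #A = k) (hB : #B = k)
    {a b c : ℝ} (hb : 0 ≤ b) (hc : 0 ≤ c) (hb₀ : b ≤ (k - 1) * (k * a - c))
    (hunprofitable : a ≤ c * (1 - 1 / k)) :
    Stable a b c (bowtieCfg A B v k) := by
  have hk' : (2 : ℝ) ≤ k := by exact_mod_cast hk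
  have hkpos : (0 : ℝ) < k := by linarith
  have hgain : 0 ≤ a - c * (1 / k) := by
    have : 0 ≤ k * a - c := nonneg_of_mul_nonneg_right (by linarith) (by linarith : (0 : ℝ) < k - 1)
    rw [mul_one_div, sub_nonneg, div_le_iff₀ hkpos]
    linarith
  refine ⟨h.configValid_bowtieCfg (by omega), fun u s hs => ?_⟩
  set P := (bowtieEvent A B v u).erase u
  have hP : (k : ℝ) - 1 ≤ #P := by
    have := h.le_card_erase_bowtieEvent hA hB u
    have : (k : ℝ) ≤ #P + 1 := by exact_mod_cast this
    linarith
  rw [h.utility_bowtieCfg (by omega) hA hB]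
  refine utility_update_le _ hb hc (by linarith) P (fun w hwu => ?_) (fun w hwu hwP => ?_) ?_ hs
  · rw [h.othersRate_bowtieCfg hA hB hwu]
    split_ifs
    · exact le_rfl
    · rw [le_sub_iff_add_le, ← two_mul, mul_one_div, div_le_one hkpos]
      exact hk'
  · have hw : w ∉ bowtieEvent A B v u := fun hw => hwP (mem_erase.mpr ⟨hwu, hw⟩)
    rwa [h.othersRate_bowtieCfg hA hB hwu, if_neg hw]
  · calc b * (1 / k) ≤ (k - 1) * (a - c * (1 / k)) := by
          rw [mul_one_div, div_le_iff₀ hkpos]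
          calc b ≤ (k - 1) * (k * a - c) := hb₀
            _ = (k - 1) * (a - c * (1 / k)) * k := by field_simp
      _ ≤ #P * (a - c * (1 / k)) := mul_le_mul_of_nonneg_right hP hgain

end IsBowtie

end Bowtie

theorem bowtie_supportable_general {V : Type*} [Fintype V] [DecidableEq V]
    (k : ℕ) (hk : 2 < k) (A B : Finset V) (v : V)
    (hA : A.card = k) (hB : B.card = k) (hAB : A ∩ B = {v}) (hUnion : A ∪ B = Finset.univ)
    (a c : ℝ) (hc : 0 < c)
    (hγ1 : 1 / (k : ℝ) < a / c) (hγ2 : a / c < 1 - 1 / (k : ℝ)) :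
    ∃ b₀ > (0 : ℝ), ∀ b : ℝ, 0 < b → b < b₀ →
      Stable a b c (bowtieCfg A B v k) ∧
      (∀ x y : V, x ≠ y →
        (connected (bowtieCfg A B v k) x y ↔ ((x ∈ A ∧ y ∈ A) ∨ (x ∈ B ∧ y ∈ B)))) ∧
      (∀ x y : V, x ∉ B → y ∉ A → x ≠ y →
        meet (bowtieCfg A B v k) x y ≤ 1 / (k : ℝ)) := by
  have h : IsBowtie A B v := ⟨hAB, hUnion⟩
  have hk' : (2 : ℝ) < k := by exact_mod_cast hk
  have hca : c < k * a := by
    rw [div_lt_div_iff₀ (by linarith) hc] at hγ1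
    linarith
  have hunprofitable : a ≤ c * (1 - 1 / k) := by
    rw [div_lt_iff₀ hc] at hγ2
    linarith
  refine ⟨(k - 1) * (k * a - c), mul_pos (by linarith) (by linarith), fun b hb hbb => ⟨?_, ?_, ?_⟩⟩
  · exact h.stable_bowtieCfg hk.le hA hB hb.le hc.le hbb.le hunprofitable
  · intro x y hxy
    exact (h.connected_bowtieCfg_iff (by omega) hA hB hxy).trans h.mem_bowtieEvent_iff
  · intro x y hx hy _
    refine (h.meet_bowtieCfg_of_not_mem ?_).le
    rw [h.mem_bowtieEvent_iff]
    tauto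

/-- Let `H_{k,1}` (`k > 2`) consist of two `k`-cliques `A`, `B` sharing
exactly the vertex `v`. If `1/k < γ = a/c < 1 - 1/k` and `b` is sufficiently small, the
configuration in which every vertex holds a single event inviting all of its neighbours at
rate `1/k` is stable and supports `H_{k,1}`: two distinct vertices are connected iff they lie
in a common clique, and pairs in different cliques have meeting rate at most `1/k`. -/
theorem bowtie_supportable {V : Type*} [Fintype V] [DecidableEq V]
    (k : ℕ) (hk : 2 < k) (A B : Finset V) (v : V)
    (hA : A.card = k) (hB : B.card = k) (hAB : A ∩ B = {v}) (hUnion : A ∪ B = Finset.univ)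
    (a c : ℝ) (ha : 0 < a) (hc : 0 < c)
    (hγ1 : 1 / (k : ℝ) < a / c) (hγ2 : a / c < 1 - 1 / (k : ℝ)) :
    ∃ b₀ > (0 : ℝ), ∀ b : ℝ, 0 < b → b < b₀ →
      Stable a b c (bowtieCfg A B v k) ∧
      (∀ x y : V, x ≠ y →
        (connected (bowtieCfg A B v k) x y ↔ ((x ∈ A ∧ y ∈ A) ∨ (x ∈ B ∧ y ∈ B)))) ∧
      (∀ x y : V, x ∉ B → y ∉ A → x ≠ y →
        meet (bowtieCfg A B v k) x y ≤ 1 / (k : ℝ)) :=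
  bowtie_supportable_general k hk A B v hA hB hAB hUnion a c hc hγ1 hγ2
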